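/- arXiv:1310.1174 — 3 statements merged into one kernel-verified Lean document; each statement's English description precedes it below -/
import Mathlib

section
/- Let C0^1,...,C_n^1 and C0^2,...,C_n^2 be two partitions of F_2^n into binary 1-perfect codes of length n, let φ : F_2^n → {0,...,n} assign to u the index k with u ∈ C_k^1, and let π be a permutation of {0,...,n}. Then the code C = {(u | v | p(u)) : u ∈ F_2^n, v ∈ C^2_{π(φ(u))}} is a binary 1-perfect code of length 2n + 1 (doubling construction). -/
/-- `C` is a 1-perfect code over the alphabet `F` with coordinate set `ι`:
minimum distance at least 3 and `|C|·(1 + |ι|·(|F|−1)) = |F|^|ι|`. -/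
def IsOnePerfectCode {ι F : Type*} [Fintype ι] [Fintype F] [DecidableEq F]
    (C : Set (ι → F)) : Prop :=
  (∀ x ∈ C, ∀ y ∈ C, x ≠ y → 3 ≤ hammingDist x y) ∧
  Nat.card C * (1 + Fintype.card ι * (Fintype.card F - 1)) =
    Fintype.card F ^ Fintype.card ι

/-!
Write a word of length `2n + 1` as `(u | v | p(u))`. Two distinct codewords either share `u`
(then the `v`-parts are distinct words of one perfect code), or have `u ≠ u'` in the same code of
the first partition (then `d(u, u') ≥ 3`), or have `v`-parts in different, hence disjoint, codes of
the second partition. In the last case both `u`- and `v`-parts differ, and if `d(u, u') = 1` the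
parity bits differ as well, so the distance is again at least `3`. Counting gives
`|C| · (2n + 2) = 2^(2n+1)` since every `C^2_k` has `2^n / (n + 1)` words.
-/

open Finset

lemma hammingDist_append {α : Type*} [DecidableEq α] {m k : ℕ} (a a' : Fin m → α)
    (b b' : Fin k → α) :
    hammingDist (Fin.append a b) (Fin.append a' b') = hammingDist a a' + hammingDist b b' := by
  simp only [hammingDist, card_filter, Fin.sum_univ_add, Fin.append_left, Fin.append_right]

lemma Fin.append_eq_append_iff {α : Type*} {m k : ℕ} {a a' : Fin m → α} {b b' : Fin k → α} :
    Fin.append a b = Fin.append a' b' ↔ a = a' ∧ b = b' :=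
  ⟨fun h => Prod.ext_iff.mp ((Fin.appendEquiv m k).injective (a₁ := (a, b)) (a₂ := (a', b')) h),
    by rintro ⟨rfl, rfl⟩; rfl⟩

lemma sum_add_sum_eq_hammingDist {ι : Type*} [Fintype ι] (x y : ι → ZMod 2) :
    (∑ i, x i) + ∑ i, y i = (hammingDist x y : ZMod 2) := by
  have hbit : ∀ a b : ZMod 2, a + b = ((if a ≠ b then 1 else 0 : ℕ) : ZMod 2) := by decide
  rw [← sum_add_distrib, hammingDist, card_filter, Nat.cast_sum]
  exact sum_congr rfl fun i _ => hbit _ _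

lemma sum_ne_sum_of_hammingDist_eq_one {ι : Type*} [Fintype ι] {x y : ι → ZMod 2}
    (h : hammingDist x y = 1) : ∑ i, x i ≠ ∑ i, y i := by
  intro heq
  have := sum_add_sum_eq_hammingDist x y
  rw [heq, CharTwo.add_self_eq_zero, h, Nat.cast_one] at this
  exact zero_ne_one this

lemma isOnePerfectCode_binary_iff {ι : Type*} [Fintype ι] (C : Set (ι → ZMod 2)) :
    IsOnePerfectCode C ↔ (∀ x ∈ C, ∀ y ∈ C, x ≠ y → 3 ≤ hammingDist x y) ∧
      Nat.card C * (Fintype.card ι + 1) = 2 ^ Fintype.card ι := by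
  simp only [IsOnePerfectCode, ZMod.card, Nat.reduceSub, mul_one, Nat.add_comm 1]

section Doubling

variable {n m : ℕ}

def doublingWord (u : Fin n → ZMod 2) (v : Fin m → ZMod 2) : Fin (n + m + 1) → ZMod 2 :=
  Fin.append (Fin.append u v) (fun _ : Fin 1 => ∑ i, u i)

def doublingCode (D : (Fin n → ZMod 2) → Set (Fin m → ZMod 2)) : Set (Fin (n + m + 1) → ZMod 2) :=
  {w | ∃ u, ∃ v ∈ D u, w = doublingWord u v}

lemma doublingWord_injective :
    Function.Injective fun x : (Fin n → ZMod 2) × (Fin m → ZMod 2) => doublingWord x.1 x.2 := by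
  rintro ⟨u, v⟩ ⟨u', v'⟩ h
  obtain ⟨huv, -⟩ := Fin.append_eq_append_iff.mp h
  obtain ⟨rfl, rfl⟩ := Fin.append_eq_append_iff.mp huv
  rfl

lemma hammingDist_doublingWord (u u' : Fin n → ZMod 2) (v v' : Fin m → ZMod 2) :
    hammingDist (doublingWord u v) (doublingWord u' v') =
      hammingDist u u' + hammingDist v v' +
        hammingDist (fun _ : Fin 1 => ∑ i, u i) (fun _ : Fin 1 => ∑ i, u' i) := by
  rw [doublingWord, doublingWord, hammingDist_append, hammingDist_append]

lemma three_le_hammingDist_doublingCode {D : (Fin n → ZMod 2) → Set (Fin m → ZMod 2)}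
    (hD : ∀ u, ∀ v ∈ D u, ∀ v' ∈ D u, v ≠ v' → 3 ≤ hammingDist v v')
    (hsep : ∀ u u', u ≠ u' → (D u ∩ D u').Nonempty → 3 ≤ hammingDist u u') :
    ∀ w ∈ doublingCode D, ∀ w' ∈ doublingCode D, w ≠ w' → 3 ≤ hammingDist w w' := by
  rintro w ⟨u, v, hv, rfl⟩ w' ⟨u', v', hv', rfl⟩ hne
  rw [hammingDist_doublingWord]
  obtain rfl | huu := eq_or_ne u u'
  · have := hD u v hv v' hv' fun h => hne (h ▸ rfl)
    omega
  obtain rfl | hvv := eq_or_ne v v'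
  · have := hsep u u' huu ⟨v, hv, hv'⟩
    omega
  have hdu := hammingDist_pos.mpr huu
  have hdv := hammingDist_pos.mpr hvv
  rcases Nat.lt_or_ge (hammingDist u u') 2 with hlt | hge
  · have hparity := sum_ne_sum_of_hammingDist_eq_one (by omega : hammingDist u u' = 1)
    have : 0 < hammingDist (fun _ : Fin 1 => ∑ i, u i) (fun _ => ∑ i, u' i) :=
      hammingDist_pos.mpr fun h => hparity (congrFun h 0)
    omega
  · omega

lemma card_doublingCode (D : (Fin n → ZMod 2) → Set (Fin m → ZMod 2)) :
    Nat.card (doublingCode D) = ∑ u, Nat.card (D u) := by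
  rw [← Nat.card_sigma]
  refine (Nat.card_congr (Equiv.ofBijective
    (fun x : Σ u, D u => ⟨doublingWord x.1 x.2, x.1, x.2, x.2.2, rfl⟩) ⟨?_, ?_⟩)).symm
  · rintro ⟨u, v, hv⟩ ⟨u', v', hv'⟩ h
    obtain ⟨rfl, rfl⟩ := Prod.mk.inj (doublingWord_injective (Subtype.ext_iff.mp h))
    rfl
  · rintro ⟨w, u, v, hv, rfl⟩
    exact ⟨⟨u, v, hv⟩, rfl⟩

end Doubling

theorem doubling_construction_general {n : ℕ}
    (C1 C2 : Fin (n + 1) → Set (Fin n → ZMod 2))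
    (h1perf : ∀ k, IsOnePerfectCode (C1 k))
    (h2perf : ∀ k, IsOnePerfectCode (C2 k))
    (h2disj : ∀ k l, k ≠ l → Disjoint (C2 k) (C2 l))
    (φ : (Fin n → ZMod 2) → Fin (n + 1)) (hφ : ∀ u, u ∈ C1 (φ u))
    (π : Equiv.Perm (Fin (n + 1))) :
    IsOnePerfectCode
      {w : Fin (n + n + 1) → ZMod 2 |
        ∃ u : Fin n → ZMod 2, ∃ v ∈ C2 (π (φ u)),
          w = Fin.append (Fin.append u v) (fun _ : Fin 1 => ∑ i, u i)} := by
  change IsOnePerfectCode (doublingCode fun u => C2 (π (φ u)))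
  simp only [isOnePerfectCode_binary_iff, Fintype.card_fin] at h1perf h2perf ⊢
  refine ⟨three_le_hammingDist_doublingCode (fun u => (h2perf _).1) ?_, ?_⟩
  · rintro u u' huu ⟨v, hv, hv'⟩
    have hφφ : φ u = φ u' := by
      by_contra hne
      exact Set.disjoint_left.mp (h2disj _ _ (π.injective.ne hne)) hv hv'
    exact (h1perf (φ u)).1 u (hφ u) u' (hφφ ▸ hφ u') huu
  · calc Nat.card (doublingCode fun u => C2 (π (φ u))) * (n + n + 1 + 1)
        = (∑ u : Fin n → ZMod 2, Nat.card (C2 (π (φ u))) * (n + 1)) * 2 := by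
          rw [card_doublingCode, ← sum_mul]; ring
      _ = 2 ^ (n + n + 1) := by
          simp only [fun k => (h2perf k).2, sum_const, card_univ, Fintype.card_fun, ZMod.card,
            Fintype.card_fin, smul_eq_mul]
          ring

/-- the doubling construction.  Given two partitions
`C^1_0, …, C^1_n` and `C^2_0, …, C^2_n` of `F_2^n` into binary 1-perfect codes,
the indexing map `φ` of the first partition, and a permutation `π` of
`{0,…,n}`, the code `C = {(u | v | p(u)) : u ∈ F_2^n, v ∈ C^2_{π(φ(u))}}`
is a binary 1-perfect code of length `2n + 1`. -/
theorem doubling_construction {n : ℕ}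
    (C1 C2 : Fin (n + 1) → Set (Fin n → ZMod 2))
    (h1perf : ∀ k, IsOnePerfectCode (C1 k))
    (h2perf : ∀ k, IsOnePerfectCode (C2 k))
    (h1disj : ∀ k l, k ≠ l → Disjoint (C1 k) (C1 l))
    (h2disj : ∀ k l, k ≠ l → Disjoint (C2 k) (C2 l))
    (h1cover : (⋃ k, C1 k) = Set.univ)
    (h2cover : (⋃ k, C2 k) = Set.univ)
    (φ : (Fin n → ZMod 2) → Fin (n + 1)) (hφ : ∀ u, u ∈ C1 (φ u))
    (π : Equiv.Perm (Fin (n + 1))) :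
    IsOnePerfectCode
      {w : Fin (n + n + 1) → ZMod 2 |
        ∃ u : Fin n → ZMod 2, ∃ v ∈ C2 (π (φ u)),
          w = Fin.append (Fin.append u v) (fun _ : Fin 1 => ∑ i, u i)} :=
  doubling_construction_general C1 C2 h1perf h2perf h2disj φ hφ π
end

section
/- Let i ≠ j be coordinates of the q-ary Hamming code H_{q,m}, let R_i and R_j be the subspaces spanned by weight-3 codewords with 1 in coordinate i (respectively j), and let u ∈ R_i + R_j have a nonzero component u_x where the point x does not lie on the line l_{ij}. Then the projective plane P_{ijx} spanned by i, j, x contains a point y distinct from i, j, x with u_y ≠ 0. -/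
variable {F : Type*} [Field F] [Fintype F] [DecidableEq F] {m n : ℕ}

/-- The linear code with parity-check columns `h`. -/
def parityCheckCode (h : Fin n → Fin m → F) : Submodule F (Fin n → F) where
  carrier := {x | ∑ j, x j • h j = 0}
  add_mem' := by
    intro a b ha hb
    simp only [Set.mem_setOf_eq, Pi.add_apply, add_smul, Finset.sum_add_distrib] at *
    simp [ha, hb]
  zero_mem' := by simp
  smul_mem' := by
    intro c a ha
    simp only [Set.mem_setOf_eq, Pi.smul_apply, smul_eq_mul, mul_smul] at *
    rw [← Finset.smul_sum, ha, smul_zero]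

/-- The submodule of vectors supported inside the coordinate set `l`. -/
def supportedIn (l : Set (Fin n)) : Submodule F (Fin n → F) where
  carrier := {u | ∀ j ∉ l, u j = 0}
  add_mem' := by intro a b ha hb j hj; simp [ha j hj, hb j hj]
  zero_mem' := by intro j hj; simp
  smul_mem' := by intro c a ha j hj; simp [ha j hj]

/-- The principal `i`-component `R_i`: span of all triples (codewords of
weight 3) with a `1` in coordinate `i`. -/
def principalComponent (h : Fin n → Fin m → F) (i : Fin n) : Submodule F (Fin n → F) :=
  Submodule.span F {u | u ∈ parityCheckCode h ∧ hammingNorm u = 3 ∧ u i = 1}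

/-- The line of `PG_{m−1}(q)` through the points `a` and `b`, viewed as a set
of coordinates: `k` is on the line iff `h_k` is in the span of `h_a, h_b`. -/
def lineThrough (h : Fin n → Fin m → F) (a b : Fin n) : Set (Fin n) :=
  {k | h k ∈ Submodule.span F {h a, h b}}


/-- The plane of `PG_{m−1}(q)` spanned by the points `a`, `b`, `c`, as a set
of coordinates. -/
def planeThrough (h : Fin n → Fin m → F) (a b c : Fin n) : Set (Fin n) :=
  {k | h k ∈ Submodule.span F {h a, h b, h c}}

/-!
A weight-3 codeword with two support points in the plane `P_{ijx}` has its third one there too,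
since the three columns are linearly dependent. Hence every element of `R_i` agrees on
`P_{ijx} \ {i}` with a codeword supported in `P_{ijx}`, and likewise for `R_j`. If `u` vanished
on `P_{ijx} \ {i, j, x}`, the sum of these two codewords would be a codeword supported in
`{i, j, x}` with nonzero `x`-entry, forcing `h_x` into the span of `h_i, h_j`.
-/

section

variable {K : Type*} [Field K] {m n : ℕ}

theorem column_mem_of_mem_parityCheckCode {h : Fin n → Fin m → K} {c : Fin n → K}
    (hc : c ∈ parityCheckCode h) {W : Submodule K (Fin m → K)} {k : Fin n} (hck : c k ≠ 0)
    (hW : ∀ l ≠ k, c l ≠ 0 → h l ∈ W) : h k ∈ W := by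
  have hsum : c k • h k + ∑ l ∈ Finset.univ.erase k, c l • h l = 0 := by
    rw [Finset.add_sum_erase _ (fun l => c l • h l) (Finset.mem_univ k)]
    exact hc
  have hrest : ∑ l ∈ Finset.univ.erase k, c l • h l ∈ W := by
    refine Submodule.sum_mem _ fun l hl => ?_
    by_cases hcl : c l = 0
    · simp [hcl]
    · exact W.smul_mem _ (hW l (Finset.ne_of_mem_erase hl) hcl)
  rw [← W.smul_mem_iff hck, eq_neg_of_add_eq_zero_left hsum]
  exact W.neg_mem hrest

theorem eq_or_eq_or_eq_of_hammingNorm_eq_three {ι β : Type*} [Fintype ι] [DecidableEq ι]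
    [Zero β] [DecidableEq β] {t : ι → β} (ht : hammingNorm t = 3) {a b c l : ι}
    (hab : a ≠ b) (hac : a ≠ c) (hbc : b ≠ c) (ha : t a ≠ 0) (hb : t b ≠ 0) (hc : t c ≠ 0)
    (hl : t l ≠ 0) : l = a ∨ l = b ∨ l = c := by
  have hsub : ({a, b, c} : Finset ι) ⊆ Finset.univ.filter (t · ≠ 0) := by
    intro y hy
    simp only [Finset.mem_insert, Finset.mem_singleton] at hy
    rcases hy with rfl | rfl | rfl <;> simpa
  have hsupp := Finset.eq_of_subset_of_card_le hsub <| by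
    rw [Finset.card_eq_three.mpr ⟨a, b, c, hab, hac, hbc, rfl⟩]
    exact ht.le
  have hl' : l ∈ ({a, b, c} : Finset ι) := by
    rw [hsupp]
    simpa using hl
  simpa using hl'

theorem mem_supportedIn_of_hammingNorm_eq_three [DecidableEq K] {h : Fin n → Fin m → K}
    {W : Submodule K (Fin m → K)} {t : Fin n → K} (htc : t ∈ parityCheckCode h)
    (htn : hammingNorm t = 3) {a b : Fin n} (hab : a ≠ b) (ha : t a ≠ 0) (hb : t b ≠ 0)
    (haW : h a ∈ W) (hbW : h b ∈ W) : t ∈ supportedIn {k | h k ∈ W} := by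
  intro k hkW
  by_contra htk
  have hak : a ≠ k := fun e => hkW (e ▸ haW)
  have hbk : b ≠ k := fun e => hkW (e ▸ hbW)
  refine hkW (column_mem_of_mem_parityCheckCode htc htk fun l hlk hl => ?_)
  rcases eq_or_eq_or_eq_of_hammingNorm_eq_three htn hab hak hbk ha hb htk hl with rfl | rfl | rfl
  exacts [haW, hbW, absurd rfl hlk]

theorem exists_codeword_supportedIn_eq_of_mem_principalComponent [DecidableEq K]
    {h : Fin n → Fin m → K} {W : Submodule K (Fin m → K)} {i : Fin n} (hiW : h i ∈ W)
    {v : Fin n → K} (hv : v ∈ principalComponent h i) :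
    ∃ c ∈ parityCheckCode h ⊓ supportedIn {k | h k ∈ W},
      ∀ k, h k ∈ W → k ≠ i → c k = v k := by
  -- Agreement on the plane minus `i` is equality after `restrict`, so the claim is a submodule
  -- inclusion and can be checked on the generating triples.
  let restrict := LinearMap.funLeft K K (Subtype.val : {k // h k ∈ W ∧ k ≠ i} → Fin n)
  suffices principalComponent h i ≤
      ((parityCheckCode h ⊓ supportedIn {k | h k ∈ W}).map restrict).comap restrict by
    obtain ⟨c, hc, hcv⟩ := this hv
    exact ⟨c, hc, fun k hkW hki => congr_fun hcv ⟨k, hkW, hki⟩⟩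
  refine Submodule.span_le.mpr ?_
  rintro t ⟨htc, htn, hti⟩
  by_cases hex : ∃ a, a ≠ i ∧ h a ∈ W ∧ t a ≠ 0
  · obtain ⟨a, hai, haW, hta⟩ := hex
    exact ⟨t, ⟨htc, mem_supportedIn_of_hammingNorm_eq_three htc htn hai hta (by simp [hti])
      haW hiW⟩, rfl⟩
  · push Not at hex
    exact ⟨0, zero_mem _, funext fun k => (hex k k.2.2 k.2.1).symm⟩

end

theorem plane_has_fourth_nonzero_point_general
    (h : Fin n → Fin m → F)
    (i j x : Fin n) (u : Fin n → F)
    (hu : u ∈ principalComponent h i ⊔ principalComponent h j)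
    (hx : u x ≠ 0) (hxl : x ∉ lineThrough h i j) :
    ∃ y ∈ planeThrough h i j x, y ≠ i ∧ y ≠ j ∧ y ≠ x ∧ u y ≠ 0 := by
  by_contra! hcon
  have hxi : x ≠ i := by rintro rfl; exact hxl (Submodule.subset_span (by simp))
  have hxj : x ≠ j := by rintro rfl; exact hxl (Submodule.subset_span (by simp))
  have hxP : x ∈ planeThrough h i j x := Submodule.subset_span (by simp)
  have hiP : h i ∈ Submodule.span F {h i, h j, h x} := Submodule.subset_span (by simp)
  have hjP : h j ∈ Submodule.span F {h i, h j, h x} := Submodule.subset_span (by simp)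
  obtain ⟨v, hv, w, hw, rfl⟩ := Submodule.mem_sup.mp hu
  obtain ⟨c₁, ⟨hc₁, hs₁⟩, hcv⟩ := exists_codeword_supportedIn_eq_of_mem_principalComponent hiP hv
  obtain ⟨c₂, ⟨hc₂, hs₂⟩, hcw⟩ := exists_codeword_supportedIn_eq_of_mem_principalComponent hjP hw
  apply hxl
  show h x ∈ Submodule.span F {h i, h j}
  refine column_mem_of_mem_parityCheckCode (add_mem hc₁ hc₂) ?_ fun l hlx hl => ?_
  · simpa [hcv x hxP hxi, hcw x hxP hxj] using hx
  have hlP : l ∈ planeThrough h i j x := by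
    by_contra hlP
    exact hl (by simp [hs₁ l hlP, hs₂ l hlP])
  have hlij : l = i ∨ l = j := by
    by_contra! hlij
    exact hl (by simpa [hcv l hlP hlij.1, hcw l hlP hlij.2] using hcon l hlP hlij.1 hlij.2 hlx)
  rcases hlij with rfl | rfl <;> exact Submodule.subset_span (by simp)

/-- if `i ≠ j`, `u ∈ R_i + R_j` has a nonzero component `u_x`
where `x` is not on the line `l_{ij}`, then the plane `P_{ijx}` contains a
point `y` distinct from `i`, `j`, `x` with `u_y ≠ 0`. -/
theorem plane_has_fourth_nonzero_point
    (h : Fin n → Fin m → F) (hm : 2 ≤ m)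
    (hn : n = (Fintype.card F ^ m - 1) / (Fintype.card F - 1))
    (hnz : ∀ j, h j ≠ 0)
    (hnp : ∀ j k, j ≠ k → ∀ c : F, h j ≠ c • h k)
    (hcover : ∀ z : Fin m → F, z ≠ 0 → ∃ j, ∃ c : F, z = c • h j)
    (i j x : Fin n) (hij : i ≠ j) (u : Fin n → F)
    (hu : u ∈ principalComponent h i ⊔ principalComponent h j)
    (hx : u x ≠ 0) (hxl : x ∉ lineThrough h i j) :
    ∃ y ∈ planeThrough h i j x, y ≠ i ∧ y ≠ j ∧ y ≠ x ∧ u y ≠ 0 :=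
  plane_has_fourth_nonzero_point_general h i j x u hu hx hxl
end

section
/- Let F_q have characteristic 2, m ≥ 4, and let c_1,...,c_m be the vectors defined via the map ξ from sums of the independent parity-check columns h_1,...,h_m (e.g. c_1 = ξ(h_1) + ξ(h_1+h_2+h_3) + ξ(h_1+h_2+h_4) + ξ(h_1+h_3+h_4), etc.). Then each c_j is a codeword of the q-ary Hamming code H_{q,m}. -/
variable {F : Type*} [Field F] [Fintype F] [DecidableEq F] {m n : ℕ}

/-- The Etzion–Vardy coset representatives `c_j` (1-indexed, characteristic 2
version): built from `ξ` applied to sums of the independent parity-check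
columns `B 1, …, B m`. -/
def evC (ξ : (Fin m → F) → (Fin n → F)) (B : ℕ → Fin m → F) (j : ℕ) : Fin n → F :=
  if j = 1 then
    ξ (B 1) + ξ (B 1 + B 2 + B 3) + ξ (B 1 + B 2 + B 4) + ξ (B 1 + B 3 + B 4)
  else if j = 2 then
    ξ (B 1) + ξ (B 2) + ξ (B 1 + B 3 + B 4) + ξ (B 2 + B 3 + B 4)
  else if j = 4 then
    (∑ i ∈ Finset.Icc 1 4, ξ (B i)) + ξ (B 1 + B 2 + B 3) + ξ (B 1 + B 2 + B 4)
      + ξ (B 1 + B 3 + B 4) + ξ (B 2 + B 3 + B 4)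
  else if Odd j then
    (∑ i ∈ Finset.Icc 1 j, ξ (B i)) + ξ (∑ i ∈ Finset.Icc 1 j, B i)
  else
    (∑ i ∈ Finset.Icc 1 j, ξ (B i)) + ξ (∑ i ∈ Finset.Icc 1 (j / 2), B i)
      + ξ (∑ i ∈ Finset.Icc (j / 2 + 1) j, B i)

/-!
Write `σ x = ∑ i, x i • h i` for the syndrome. The hypothesis on `ξ` says exactly that
`σ (ξ z) = z` for `z ≠ 0`. Every argument of `ξ` in `c_j` is a sum of distinct independent
columns `h_1, …, h_m`, hence nonzero, so `σ c_j` is the sum of those arguments. In each case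
every column occurs in it an even number of times, and this vanishes in characteristic 2.
-/

theorem mem_parityCheckCode_iff {K : Type*} [Field K] (h : Fin n → Fin m → K) (x : Fin n → K) :
    x ∈ parityCheckCode h ↔ Fintype.linearCombination K h x = 0 :=
  Iff.rfl

theorem LinearIndepOn.finset_sum_ne_zero {R M ι : Type*} [Ring R] [Nontrivial R]
    [AddCommGroup M] [Module R M] {v : ι → M} {s : Set ι} (hv : LinearIndepOn R v s)
    {t : Finset ι} (hts : ↑t ⊆ s) (ht : t.Nonempty) : ∑ i ∈ t, v i ≠ 0 := by
  intro h0
  obtain ⟨i, hi⟩ := ht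
  exact one_ne_zero (linearIndepOn_iff'.1 hv t 1 hts (by simpa using h0) i hi)

theorem LinearIndepOn.add_add_ne_zero {R M ι : Type*} [Ring R] [Nontrivial R]
    [AddCommGroup M] [Module R M] {v : ι → M} {s : Set ι} (hv : LinearIndepOn R v s)
    {a b c : ι} (ha : a ∈ s) (hb : b ∈ s) (hc : c ∈ s) (hab : a ≠ b) (hac : a ≠ c)
    (hbc : b ≠ c) : v a + v b + v c ≠ 0 := by
  classical
  have hsum : ∑ i ∈ {a, b, c}, v i = v a + v b + v c := by
    rw [Finset.sum_insert (by simp [hab, hac]), Finset.sum_pair hbc, add_assoc]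
  rw [← hsum]
  exact hv.finset_sum_ne_zero (by simp [Set.insert_subset_iff, ha, hb, hc]) (by simp)

theorem linearIndepOn_Icc_one_iff {R M : Type*} [Semiring R] [AddCommMonoid M] [Module R M]
    {B : ℕ → M} {m : ℕ} :
    LinearIndepOn R B (Set.Icc 1 m) ↔ LinearIndependent R (fun i : Fin m ↦ B (i + 1)) := by
  have hrange : Set.Icc 1 m = Set.range (fun i : Fin m ↦ (i : ℕ) + 1) := by
    ext k
    simp only [Set.mem_Icc, Set.mem_range, Fin.exists_iff]
    constructor
    · rintro ⟨hk1, hkm⟩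
      exact ⟨k - 1, by omega, by omega⟩
    · rintro ⟨i, hi, rfl⟩
      omega
  rw [hrange, linearIndepOn_range_iff (fun i i' hii' ↦ Fin.ext (by simpa using hii'))]
  rfl

section

variable {K : Type*} [Field K] {ξ : (Fin m → K) → (Fin n → K)} {B : ℕ → Fin m → K}
  {σ : (Fin n → K) →ₗ[K] (Fin m → K)}

theorem Finset.coe_Icc_subset_Icc_one {a b : ℕ} (ha : 1 ≤ a) (hb : b ≤ m) :
    (↑(Finset.Icc a b) : Set ℕ) ⊆ Set.Icc 1 m := by
  rw [Finset.coe_Icc]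
  exact Set.Icc_subset_Icc ha hb

theorem map_sum_xi_Icc (hσ : ∀ z ≠ 0, σ (ξ z) = z) (hB : LinearIndepOn K B (Set.Icc 1 m))
    {a b : ℕ} (ha : 1 ≤ a) (hb : b ≤ m) :
    σ (∑ i ∈ Finset.Icc a b, ξ (B i)) = ∑ i ∈ Finset.Icc a b, B i := by
  rw [map_sum]
  exact Finset.sum_congr rfl fun i hi ↦
    hσ _ (hB.ne_zero (Finset.coe_Icc_subset_Icc_one ha hb hi))

theorem map_xi_sum_Icc (hσ : ∀ z ≠ 0, σ (ξ z) = z) (hB : LinearIndepOn K B (Set.Icc 1 m))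
    {a b : ℕ} (ha : 1 ≤ a) (hab : a ≤ b) (hb : b ≤ m) :
    σ (ξ (∑ i ∈ Finset.Icc a b, B i)) = ∑ i ∈ Finset.Icc a b, B i :=
  hσ _ (hB.finset_sum_ne_zero (Finset.coe_Icc_subset_Icc_one ha hb) (Finset.nonempty_Icc.2 hab))

theorem map_evC_eq_zero [CharP K 2] (hσ : ∀ z ≠ 0, σ (ξ z) = z)
    (hB : LinearIndepOn K B (Set.Icc 1 m)) (hm : 4 ≤ m) {j : ℕ} (hj1 : 1 ≤ j) (hjm : j ≤ m) :
    σ (evC ξ B j) = 0 := by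
  have two : (2 : K) = 0 := CharTwo.two_eq_zero
  have single : ∀ a, 1 ≤ a → a ≤ 4 → σ (ξ (B a)) = B a :=
    fun a ha1 ha4 ↦ hσ _ (hB.ne_zero ⟨ha1, by omega⟩)
  have triple : ∀ a b c, 1 ≤ a → a < b → b < c → c ≤ 4 →
      σ (ξ (B a + B b + B c)) = B a + B b + B c :=
    fun a b c ha hab hbc hc ↦ hσ _ (hB.add_add_ne_zero ⟨ha, by omega⟩ ⟨by omega, by omega⟩
      ⟨by omega, by omega⟩ hab.ne (by omega) hbc.ne)
  unfold evC
  split_ifs with _ _ _ hodd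
  · simp (disch := omega) only [map_add, single, triple]
    linear_combination (norm := module) two • (2 • B 1 + B 2 + B 3 + B 4)
  · simp (disch := omega) only [map_add, single, triple]
    linear_combination (norm := module) two • (B 1 + B 2 + B 3 + B 4)
  · simp (disch := omega) only [map_add, triple, map_sum_xi_Icc hσ hB le_rfl hm]
    rw [show ∑ i ∈ Finset.Icc 1 4, B i = B 1 + B 2 + B 3 + B 4 by simp [Finset.sum_Icc_succ_top]]
    linear_combination (norm := module) two • (2 • B 1 + 2 • B 2 + 2 • B 3 + 2 • B 4)
  · rw [map_add, map_sum_xi_Icc hσ hB le_rfl hjm, map_xi_sum_Icc hσ hB le_rfl hj1 hjm]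
    linear_combination (norm := module) two • ∑ i ∈ Finset.Icc 1 j, B i
  · obtain ⟨r, rfl⟩ : Even j := Nat.not_odd_iff_even.1 hodd
    have hr : (r + r) / 2 = r := by omega
    have hsplit : ∑ i ∈ Finset.Icc 1 r, B i + ∑ i ∈ Finset.Icc (r + 1) (r + r), B i =
        ∑ i ∈ Finset.Icc 1 (r + r), B i := by
      simpa only [← Finset.Icc_add_one_left_eq_Ioc, zero_add] using
        Finset.sum_Ioc_consecutive B (Nat.zero_le r) (Nat.le_add_left r r)
    rw [hr, map_add, map_add, add_assoc, map_sum_xi_Icc hσ hB le_rfl hjm,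
      map_xi_sum_Icc hσ hB le_rfl (by omega) (by omega),
      map_xi_sum_Icc hσ hB (by omega) (by omega) hjm, hsplit]
    linear_combination (norm := module) two • ∑ i ∈ Finset.Icc 1 (r + r), B i

end

/-- over a finite field of characteristic 2, with `m ≥ 4`, each
of the Etzion–Vardy vectors `c_1, …, c_m` is a codeword of the `q`-ary Hamming
code `H_{q,m}`. -/
theorem evC_mem_hamming [CharP F 2]
    (h : Fin n → Fin m → F) (hm : 4 ≤ m)
    (e : Fin m → Fin n)
    (hind : LinearIndependent F (h ∘ e))
    (B : ℕ → Fin m → F)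
    (hB : ∀ k (hk1 : 1 ≤ k) (hk2 : k ≤ m), B k = h (e ⟨k - 1, by omega⟩))
    (ξ : (Fin m → F) → (Fin n → F))
    (hξ : ∀ z : Fin m → F, z ≠ 0 → ∃ jc : Fin n, ∃ α : F, α ≠ 0 ∧
      z = α • h jc ∧ ξ z = Function.update (0 : Fin n → F) jc α) :
    ∀ j, 1 ≤ j → j ≤ m → evC ξ B j ∈ parityCheckCode h := by
  intro j hj1 hjm
  have hσ : ∀ z ≠ 0, Fintype.linearCombination F h (ξ z) = z := by
    intro z hz
    obtain ⟨i, α, -, rfl, hξz⟩ := hξ z hz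
    rw [hξz]
    exact Fintype.linearCombination_apply_single F h i α
  have hBind : LinearIndepOn F B (Set.Icc 1 m) := by
    have hshift : (fun i : Fin m ↦ B (i + 1)) = h ∘ e :=
      funext fun i ↦ by simp [hB (i + 1) (by omega) i.is_lt]
    rwa [linearIndepOn_Icc_one_iff, hshift]
  exact (mem_parityCheckCode_iff h _).2 (map_evC_eq_zero hσ hBind hm hj1 hjm)
end
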